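/- arXiv:2110.03135 — 6 statements merged into one kernel-verified Lean document; each statement's English description precedes it below -/
import Mathlib

section
/- Let ν be a probability measure on a measurable input space 𝒳, let κ and κ̃ be measurable maps (Markov kernels) assigning to each x ∈ 𝒳 probability vectors κ(x) and κ̃(x) on {1,…,K} (the conditional distributions P(Y|x) of the true label and P(Ỹ|x) of the assigned label), and let μ be a Markov kernel from 𝒳 to {1,…,K} × {1,…,K} such that for ν-almost every x the two marginals of μ(x) are κ(x) and κ̃(x). Draw N i.i.d. triples (x_i, y_i, ỹ_i) from the joint law given by x_i ∼ ν and (y_i, ỹ_i) | x_i ∼ μ(x_i). Then for every δ ∈ (0,1), with probability at least 1 − δ, the empirical label noise satisfies (1/N)∑_{i=1}^N 1(ỹ_i ≠ y_i) ≥ ∫_𝒳 ‖κ̃(x) − κ(x)‖_TV dν(x) − √(log(2/δ)/(2N)). -/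
/-!
For each input `x`, the law `μ x` of `(Y, Ỹ)` is a coupling of `κ x` and `κ̃ x`, so the coupling
inequality gives `‖κ̃ x - κ x‖_TV ≤ P(Ỹ ≠ Y | x)`. Integrating against `ν`, the mean total
variation distance is at most the noise rate `p = P(Ỹ ≠ Y)` under `ν ⊗ₘ μ`. The sample noise
indicators are i.i.d. `[0, 1]`-valued with mean `p`, so Hoeffding's lower tail bound puts the
empirical noise rate below `p - √(log(2/δ)/(2N))` with probability at most `δ / 2`.
-/

open MeasureTheory ProbabilityTheory Finset

lemma sum_abs_ite_eq_sub_ite_eq {α : Type*} [Fintype α] [DecidableEq α] (a b : α) :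
    ∑ j, |(if b = j then (1 : ℝ) else 0) - (if a = j then 1 else 0)| =
      if b ≠ a then 2 else 0 := by
  by_cases hba : b = a
  · simp [hba]
  · rw [Fintype.sum_eq_add b a hba fun j ⟨hjb, hja⟩ => by simp [Ne.symm hjb, Ne.symm hja]]
    norm_num [hba, Ne.symm hba]

lemma sum_abs_map_snd_sub_map_fst_le {α : Type*} [Fintype α] [MeasurableSpace α]
    [MeasurableSingletonClass α] (m : Measure (α × α)) [IsFiniteMeasure m] :
    ∑ j, |(m.map Prod.snd).real {j} - (m.map Prod.fst).real {j}| ≤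
      2 * m.real {q | q.2 ≠ q.1} := by
  classical
  have h_marginal (f : α × α → α) (hf : Measurable f) (j : α) :
      (m.map f).real {j} = ∫ q, (if f q = j then (1 : ℝ) else 0) ∂m := by
    rw [map_measureReal_apply hf (measurableSet_singleton j), ← integral_indicator_one
      (hf (measurableSet_singleton j))]
    rfl
  calc ∑ j, |(m.map Prod.snd).real {j} - (m.map Prod.fst).real {j}|
      = ∑ j, |∫ q, ((if q.2 = j then (1 : ℝ) else 0) - (if q.1 = j then 1 else 0)) ∂m| := by
        simp only [h_marginal _ measurable_snd, h_marginal _ measurable_fst]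
        congr! with j
        exact (integral_sub (.of_finite) (.of_finite)).symm
    _ ≤ ∑ j, ∫ q, |(if q.2 = j then (1 : ℝ) else 0) - (if q.1 = j then 1 else 0)| ∂m :=
        Finset.sum_le_sum fun j _ => abs_integral_le_integral_abs
    _ = ∫ q, (if q.2 ≠ q.1 then (2 : ℝ) else 0) ∂m := by
        rw [← integral_finsetSum]
        · simp_rw [sum_abs_ite_eq_sub_ite_eq]
        · exact fun j _ => .of_finite
    _ = 2 * m.real {q | q.2 ≠ q.1} := by
        rw [← integral_indicator_one (Set.toFinite _).measurableSet, ← integral_const_mul]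
        congr 1 with q
        by_cases h : q.2 = q.1 <;> simp [h]

lemma integral_sum_abs_sub_le_measureReal_compProd_ne {𝒳 α : Type*} [MeasurableSpace 𝒳]
    [Fintype α] [MeasurableSpace α] [MeasurableSingletonClass α]
    (ν : Measure 𝒳) [IsFiniteMeasure ν] (μ : Kernel 𝒳 (α × α)) [IsMarkovKernel μ]
    (κ κt : 𝒳 → α → ℝ)
    (hκ : ∀ᵐ x ∂ν, ∀ j, ((μ x).map Prod.fst).real {j} = κ x j)
    (hκt : ∀ᵐ x ∂ν, ∀ j, ((μ x).map Prod.snd).real {j} = κt x j) :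
    ∫ x, (1 / 2) * ∑ j, |κt x j - κ x j| ∂ν ≤ (ν ⊗ₘ μ).real {z | z.2.2 ≠ z.2.1} := by
  set s : Set (α × α) := {q | q.2 ≠ q.1}
  have hs : MeasurableSet s := (Set.toFinite s).measurableSet
  have h_compProd : (ν ⊗ₘ μ).real (Prod.snd ⁻¹' s) = ∫ x, (μ x).real s ∂ν := by
    rw [← integral_indicator_one (measurable_snd hs),
      Measure.integral_compProd ((integrable_const 1).indicator (measurable_snd hs))]
    congr with x
    rw [← integral_indicator_one hs]
    rfl
  rw [show {z : 𝒳 × (α × α) | z.2.2 ≠ z.2.1} = Prod.snd ⁻¹' s from rfl, h_compProd]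
  -- The left integrand need not be integrable: only the dominating side has to be.
  refine integral_mono_of_nonneg (ae_of_all _ fun x => by positivity)
    (.of_bound (μ.measurable_coe hs).ennreal_toReal.aestronglyMeasurable 1
      (ae_of_all _ fun x => by simp [abs_of_nonneg measureReal_nonneg, measureReal_le_one])) ?_
  filter_upwards [hκ, hκt] with x hx hxt
  have := sum_abs_map_snd_sub_map_fst_le (μ x)
  simp only [hx, hxt] at this
  linarith

lemma measureReal_sum_le_sub_le_of_iIndepFun {Ω ι : Type*} [MeasurableSpace Ω] {μ : Measure Ω}
    [IsProbabilityMeasure μ] {X : ι → Ω → ℝ} (h_indep : iIndepFun X μ)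
    (h_meas : ∀ i, AEMeasurable (X i) μ) {a b m : ℝ}
    (h_bound : ∀ i, ∀ᵐ ω ∂μ, X i ω ∈ Set.Icc a b) (h_mean : ∀ i, μ[X i] = m)
    (s : Finset ι) {ε : ℝ} (hε : 0 ≤ ε) :
    μ.real {ω | ∑ i ∈ s, X i ω ≤ #s * m - ε} ≤
      Real.exp (-2 * ε ^ 2 / (#s * (b - a) ^ 2)) := by
  have h_subG : ∀ i ∈ s, HasSubgaussianMGF (fun ω => m - X i ω) ((‖b - a‖₊ / 2) ^ 2) μ :=
    fun i _ => by
      convert (hasSubgaussianMGF_of_mem_Icc (h_meas i) (h_bound i)).neg using 1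
      ext ω
      simp [h_mean i]
  have h_indep' : iIndepFun (fun i ω => m - X i ω) μ :=
    h_indep.comp (fun _ x => m - x) fun _ => measurable_const.sub measurable_id
  calc μ.real {ω | ∑ i ∈ s, X i ω ≤ #s * m - ε}
      = μ.real {ω | ε ≤ ∑ i ∈ s, (m - X i ω)} := by
        congr with ω
        simp only [sum_sub_distrib, sum_const, nsmul_eq_mul]
        constructor <;> intro h <;> linarith
    _ ≤ Real.exp (-ε ^ 2 / (2 * ∑ i ∈ s, ((‖b - a‖₊ / 2) ^ 2 : NNReal))) :=
        HasSubgaussianMGF.measure_sum_ge_le_of_iIndepFun h_indep' h_subG hε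
    _ = Real.exp (-2 * ε ^ 2 / (#s * (b - a) ^ 2)) := by
        congr 1
        simp only [sum_const, nsmul_eq_mul, NNReal.coe_mul, NNReal.coe_natCast, NNReal.coe_pow,
          NNReal.coe_div, coe_nnnorm, Real.norm_eq_abs, NNReal.coe_ofNat, div_pow, sq_abs]
        generalize (b - a) ^ 2 = c
        ring

lemma one_sub_le_measureReal_sub_sqrt_log_le_mean {Ω ι : Type*} [MeasurableSpace Ω]
    {μ : Measure Ω} [IsProbabilityMeasure μ] [Fintype ι] [Nonempty ι] {X : ι → Ω → ℝ}
    (h_indep : iIndepFun X μ) (h_meas : ∀ i, AEMeasurable (X i) μ)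
    (h_bound : ∀ i, ∀ᵐ ω ∂μ, X i ω ∈ Set.Icc 0 1) {m : ℝ} (h_mean : ∀ i, μ[X i] = m)
    {δ : ℝ} (hδ0 : 0 < δ) (hδ1 : δ ≤ 1) :
    1 - δ ≤ μ.real {ω | m - √(Real.log (1 / δ) / (2 * Fintype.card ι)) ≤
      (1 / (Fintype.card ι : ℝ)) * ∑ i, X i ω} := by
  have h_tail := measureReal_sum_le_sub_le_of_iIndepFun h_indep h_meas h_bound h_mean univ
    (ε := Fintype.card ι * √(Real.log (1 / δ) / (2 * Fintype.card ι))) (by positivity)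
  simp only [card_univ, sub_zero, one_pow, mul_one] at h_tail
  set n : ℝ := (Fintype.card ι : ℝ)
  set t := √(Real.log (1 / δ) / (2 * n))
  have hn : 0 < n := Nat.cast_pos.mpr Fintype.card_pos
  have h_exp : Real.exp (-2 * (n * t) ^ 2 / n) = δ := by
    have h_log : 0 ≤ Real.log (1 / δ) := Real.log_nonneg (by rw [le_div_iff₀ hδ0]; linarith)
    rw [mul_pow, Real.sq_sqrt (by positivity)]
    field_simp
    rw [Real.exp_neg, Real.exp_log (by positivity), inv_div, div_one]
  set E := {ω | m - t ≤ (1 / n) * ∑ i, X i ω}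
  have h_compl : Eᶜ ⊆ {ω | ∑ i, X i ω ≤ n * m - n * t} := by
    intro ω hω
    rw [Set.mem_compl_iff, Set.mem_ofPred_eq, not_le, one_div, ← div_eq_inv_mul,
      div_lt_iff₀ hn] at hω
    rw [Set.mem_ofPred_eq]
    linarith
  have h_total : 1 ≤ μ.real E + μ.real Eᶜ := by
    simpa [Set.union_compl_self] using measureReal_union_le (μ := μ) E Eᶜ
  linarith [measureReal_mono (μ := μ) h_compl]

theorem label_noise_of_distribution_mismatch_general
    {𝒳 : Type*} [MeasurableSpace 𝒳] {K : ℕ}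
    (ν : Measure 𝒳) [IsProbabilityMeasure ν]
    (κ κt : 𝒳 → Fin K → ℝ)
    (hκprob : ∀ x, (∀ j, 0 ≤ κ x j) ∧ ∑ j : Fin K, κ x j = 1)
    (hκtprob : ∀ x, (∀ j, 0 ≤ κt x j) ∧ ∑ j : Fin K, κt x j = 1)
    (μ : Kernel 𝒳 (Fin K × Fin K)) [IsMarkovKernel μ]
    (hmarg : ∀ᵐ x ∂ν,
      (∀ j : Fin K, (μ x).map Prod.fst {j} = ENNReal.ofReal (κ x j)) ∧
      (∀ j : Fin K, (μ x).map Prod.snd {j} = ENNReal.ofReal (κt x j)))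
    {Ω : Type*} [MeasureSpace Ω] [IsProbabilityMeasure (ℙ : Measure Ω)]
    {N : ℕ} (hN : 0 < N)
    (T : Fin N → Ω → 𝒳 × (Fin K × Fin K))
    (hTmeas : ∀ i, Measurable (T i))
    (hTlaw : ∀ i, Measure.map (T i) ℙ = ν.compProd μ)
    (hTindep : iIndepFun T ℙ)
    (δ : ℝ) (hδ : δ ∈ Set.Ioo (0 : ℝ) 1) :
    1 - δ ≤
      (ℙ {ω |
        (∫ x, (1 / 2) * ∑ j : Fin K, |κt x j - κ x j| ∂ν) -
            Real.sqrt (Real.log (2 / δ) / (2 * N)) ≤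
          (1 / (N : ℝ)) *
            ∑ i : Fin N, (if (T i ω).2.2 ≠ (T i ω).2.1 then (1 : ℝ) else 0)}).toReal := by
  obtain ⟨hδ0, hδ1⟩ := hδ
  have : NeZero N := ⟨hN.ne'⟩
  set D : Set (𝒳 × (Fin K × Fin K)) := {z | z.2.2 ≠ z.2.1}
  have hD : MeasurableSet D :=
    measurable_snd (Set.toFinite {q : Fin K × Fin K | q.2 ≠ q.1}).measurableSet
  have h_ite z : (if z.2.2 ≠ z.2.1 then (1 : ℝ) else 0) = D.indicator 1 z := by
    simp [D, Set.indicator_apply]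
  have h_mean i : ℙ[D.indicator 1 ∘ T i] = (ν ⊗ₘ μ).real D := by
    rw [Function.comp_def, ← integral_map (hTmeas i).aemeasurable (by fun_prop), hTlaw i,
      integral_indicator_one hD]
  have h_TV : ∫ x, (1 / 2) * ∑ j, |κt x j - κ x j| ∂ν ≤ (ν ⊗ₘ μ).real D := by
    refine integral_sum_abs_sub_le_measureReal_compProd_ne ν μ κ κt ?_ ?_
    · filter_upwards [hmarg] with x hx j
      rw [measureReal_def, hx.1 j, ENNReal.toReal_ofReal ((hκprob x).1 j)]
    · filter_upwards [hmarg] with x hx j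
      rw [measureReal_def, hx.2 j, ENNReal.toReal_ofReal ((hκtprob x).1 j)]
  have h_conf := one_sub_le_measureReal_sub_sqrt_log_le_mean
    (hTindep.comp (fun _ => D.indicator 1) fun _ => measurable_const.indicator hD)
    (fun i => ((measurable_const.indicator hD).comp (hTmeas i)).aemeasurable)
    (fun i => ae_of_all _ fun ω =>
      ⟨Set.indicator_nonneg (by simp) _, Set.indicator_le_self' (by simp) _⟩)
    h_mean (half_pos hδ0) (by linarith)
  rw [Fintype.card_fin, one_div_div] at h_conf
  simp only [h_ite, ← measureReal_def]
  refine (by linarith : 1 - δ ≤ 1 - δ / 2).trans (h_conf.trans (measureReal_mono ?_))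
  intro ω hω
  simp only [Set.mem_ofPred_eq, Function.comp_apply] at hω ⊢
  linarith

/-- Mismatch between the assigned and true label distributions implies label noise:
if for `ν`-a.e. input `x` the kernel `μ x` is a coupling of the true label distribution
`κ x` and the assigned label distribution `κ̃ x`, and we draw `N` i.i.d. triples
`(xᵢ, yᵢ, ỹᵢ)` from the joint law `ν ⊗ₘ μ`, then with probability at least `1 - δ` the
empirical label noise is at least the mean total variation distance between `κ̃` and `κ`
minus `√(log(2/δ)/(2N))`. -/
theorem label_noise_of_distribution_mismatch
    {𝒳 : Type*} [MeasurableSpace 𝒳] {K : ℕ}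
    (ν : Measure 𝒳) [IsProbabilityMeasure ν]
    (κ κt : 𝒳 → Fin K → ℝ)
    (hκmeas : ∀ j, Measurable fun x => κ x j)
    (hκtmeas : ∀ j, Measurable fun x => κt x j)
    (hκprob : ∀ x, (∀ j, 0 ≤ κ x j) ∧ ∑ j : Fin K, κ x j = 1)
    (hκtprob : ∀ x, (∀ j, 0 ≤ κt x j) ∧ ∑ j : Fin K, κt x j = 1)
    (μ : Kernel 𝒳 (Fin K × Fin K)) [IsMarkovKernel μ]
    (hmarg : ∀ᵐ x ∂ν,
      (∀ j : Fin K, (μ x).map Prod.fst {j} = ENNReal.ofReal (κ x j)) ∧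
      (∀ j : Fin K, (μ x).map Prod.snd {j} = ENNReal.ofReal (κt x j)))
    {Ω : Type*} [MeasureSpace Ω] [IsProbabilityMeasure (ℙ : Measure Ω)]
    {N : ℕ} (hN : 0 < N)
    (T : Fin N → Ω → 𝒳 × (Fin K × Fin K))
    (hTmeas : ∀ i, Measurable (T i))
    (hTlaw : ∀ i, Measure.map (T i) ℙ = ν.compProd μ)
    (hTindep : iIndepFun T ℙ)
    (δ : ℝ) (hδ : δ ∈ Set.Ioo (0 : ℝ) 1) :
    1 - δ ≤
      (ℙ {ω |
        (∫ x, (1 / 2) * ∑ j : Fin K, |κt x j - κ x j| ∂ν) -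
            Real.sqrt (Real.log (2 / δ) / (2 * N)) ≤
          (1 / (N : ℝ)) *
            ∑ i : Fin N, (if (T i ω).2.2 ≠ (T i ω).2.1 then (1 : ℝ) else 0)}).toReal :=
  label_noise_of_distribution_mismatch_general ν κ κt hκprob hκtprob μ hmarg hN T hTmeas hTlaw
    hTindep δ hδ
end

section
/- Let f : ℝ^d → ℝ be L-Lipschitz with respect to the ℓ2 norm (L > 0), let x, x* ∈ ℝ^d with f(x*) = 1 and f(x) ≤ 1, and suppose there exists a linear map H : ℝ^d → ℝ^d (a Hessian ∇²f(z) at some intermediate point z) such that ∇f(x) = H(x − x*) and ‖Hv‖₂ ≥ σ_m ‖v‖₂ for all v ∈ ℝ^d, where σ_m > 0. Then ‖∇f(x)‖₂ ≥ (σ_m/L)(1 − f(x)). -/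
theorem sub_le_mul_norm_sub_of_abs_sub_le {E : Type*} [SeminormedAddCommGroup E] {f : E → ℝ}
    {L : ℝ} (hf : ∀ a b, |f a - f b| ≤ L * ‖a - b‖) (a b : E) :
    f b - f a ≤ L * ‖a - b‖ := by
  rw [← norm_sub_rev]
  exact (le_abs_self _).trans (hf b a)

theorem gradient_norm_lower_bound_general {d : ℕ}
    (f : EuclideanSpace ℝ (Fin d) → ℝ) (L : ℝ) (hL : 0 < L)
    (hLip : ∀ a b, |f a - f b| ≤ L * ‖a - b‖)
    (x xstar : EuclideanSpace ℝ (Fin d))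
    (hxstar : f xstar = 1)
    (H : EuclideanSpace ℝ (Fin d) →L[ℝ] EuclideanSpace ℝ (Fin d))
    (σm : ℝ) (hσm : 0 < σm)
    (hgrad : gradient f x = H (x - xstar))
    (hHlow : ∀ v, σm * ‖v‖ ≤ ‖H v‖) :
    σm / L * (1 - f x) ≤ ‖gradient f x‖ := by
  have hgap : 1 - f x ≤ L * ‖x - xstar‖ :=
    hxstar ▸ sub_le_mul_norm_sub_of_abs_sub_le hLip x xstar
  calc σm / L * (1 - f x) ≤ σm / L * (L * ‖x - xstar‖) := by gcongr
    _ = σm * ‖x - xstar‖ := by field_simp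
    _ ≤ ‖H (x - xstar)‖ := hHlow _
    _ = ‖gradient f x‖ := by rw [hgrad]

/-- Gradient-norm lower bound: if `f` is `L`-Lipschitz, attains the value `1` at `x*`, and the
gradient of `f` at `x` is the image of `x - x*` under a linear map `H` whose singular values
are bounded below by `σm > 0`, then `‖∇f(x)‖₂ ≥ (σm/L)(1 - f(x))`. -/
theorem gradient_norm_lower_bound {d : ℕ}
    (f : EuclideanSpace ℝ (Fin d) → ℝ) (L : ℝ) (hL : 0 < L)
    (hLip : ∀ a b, |f a - f b| ≤ L * ‖a - b‖)
    (x xstar : EuclideanSpace ℝ (Fin d))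
    (hxstar : f xstar = 1) (hfx : f x ≤ 1)
    (H : EuclideanSpace ℝ (Fin d) →L[ℝ] EuclideanSpace ℝ (Fin d))
    (σm : ℝ) (hσm : 0 < σm)
    (hgrad : gradient f x = H (x - xstar))
    (hHlow : ∀ v, σm * ‖v‖ ≤ ‖H v‖) :
    σm / L * (1 - f x) ≤ ‖gradient f x‖ :=
  gradient_norm_lower_bound_general f L hL hLip x xstar hxstar H σm hσm hgrad hHlow
end

section
/- Let f : ℝ^d → ℝ^K be such that f(w) is a probability vector on {1,…,K} for every w and each coordinate f(·)_j is twice continuously differentiable. Fix an input x, a class y, ε > 0, and constants 0 < σ_m ≤ σ_M, L > 0. Assume: (i) ‖∇²f(w)_y‖_op ≤ σ_M for every w; (ii) f(·)_y is L-Lipschitz with respect to the ℓ2 norm; (iii) ∇f(x)_y ≠ 0; (iv) there exist x* with f(x*)_y = 1 and a point z such that ∇f(x)_y = ∇²f(z)_y (x − x*) with ‖∇²f(z)_y v‖₂ ≥ σ_m ‖v‖₂ for all v. Let x' = x + δ with δ = −ε ∇f(x)_y/‖∇f(x)_y‖₂. Then the total variation distance between the label distributions at x and x' satisfies (1/2)∑_{j=1}^K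 |f(x)_j − f(x')_j| ≥ (ε/2)(1 − f(x)_y) σ_m/L − (ε²/4) σ_M. -/
/-!
The `y`-coordinate alone already witnesses the bound. By the descent lemma (the Hessian bound
makes `∇f(·)_y` `σM`-Lipschitz), a step of length `ε` against the gradient lowers `f(·)_y` by at
least `ε ‖∇f(x)_y‖ - σM ε² / 2`. On the other hand the Lipschitz bound between `x` and `x*` and
the lower bound on the Hessian at `z` give `‖∇f(x)_y‖ ≥ σm ‖x - x*‖ ≥ σm (1 - f(x)_y) / L`.
-/

lemma le_add_deriv_add_of_deriv_sub_le {φ φ' : ℝ → ℝ} {C : ℝ}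
    (hφ : ∀ t, HasDerivAt φ (φ' t) t) (hφ' : ∀ t ∈ Set.Ico (0 : ℝ) 1, φ' t - φ' 0 ≤ C * t) :
    φ 1 ≤ φ 0 + φ' 0 + C / 2 := by
  have hB : ∀ t, HasDerivAt (fun t => φ 0 + t * φ' 0 + C / 2 * t ^ 2) (φ' 0 + C * t) t := by
    intro t
    refine (((hasDerivAt_mul_const (φ' 0)).const_add (φ 0)).add
      ((hasDerivAt_pow 2 t).const_mul (C / 2))).congr_deriv ?_
    push_cast
    ring
  have := image_le_of_deriv_right_le_deriv_boundary (a := 0) (b := 1)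
    (fun t _ => (hφ t).continuousAt.continuousWithinAt)
    (fun t _ => (hφ t).hasDerivWithinAt) (B := fun t => φ 0 + t * φ' 0 + C / 2 * t ^ 2)
    (by simp) (fun t _ => (hB t).continuousAt.continuousWithinAt)
    (fun t _ => (hB t).hasDerivWithinAt) (fun t ht => by linarith [hφ' t ht])
    (Set.right_mem_Icc.2 zero_le_one)
  simpa using this

section

variable {E : Type*} [NormedAddCommGroup E] [NormedSpace ℝ E]

lemma norm_fderiv_sub_fderiv_le_of_norm_iteratedFDeriv_two_le {g : E → ℝ} (hg : ContDiff ℝ 2 g)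
    {M : ℝ} (hM : ∀ w, ‖iteratedFDeriv ℝ 2 g w‖ ≤ M) (a b : E) :
    ‖fderiv ℝ g a - fderiv ℝ g b‖ ≤ M * ‖a - b‖ := by
  refine Convex.norm_image_sub_le_of_norm_fderiv_le (𝕜 := ℝ) (fun w _ => ?_) (fun w _ => ?_)
    convex_univ trivial trivial
  · exact (hg.fderiv_right (m := 1) le_rfl).differentiable one_ne_zero w
  · rw [← norm_iteratedFDeriv_one, norm_iteratedFDeriv_fderiv]
    exact hM w

lemma ContDiff.le_add_fderiv_add_of_norm_iteratedFDeriv_two_le {g : E → ℝ} (hg : ContDiff ℝ 2 g)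
    {M : ℝ} (hM : ∀ w, ‖iteratedFDeriv ℝ 2 g w‖ ≤ M) (x δ : E) :
    g (x + δ) ≤ g x + fderiv ℝ g x δ + M / 2 * ‖δ‖ ^ 2 := by
  have hline : ∀ t : ℝ, HasDerivAt (fun t : ℝ => g (x + t • δ)) (fderiv ℝ g (x + t • δ) δ) t :=
    fun t => (hg.differentiable two_ne_zero _).hasFDerivAt.comp_hasDerivAt t
      (by simpa using ((hasDerivAt_id t).smul_const δ).const_add x)
  have key := le_add_deriv_add_of_deriv_sub_le hline (C := M * ‖δ‖ ^ 2) fun t ht => calc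
    fderiv ℝ g (x + t • δ) δ - fderiv ℝ g (x + (0 : ℝ) • δ) δ
        = (fderiv ℝ g (x + t • δ) - fderiv ℝ g x) δ := by simp
    _ ≤ ‖fderiv ℝ g (x + t • δ) - fderiv ℝ g x‖ * ‖δ‖ :=
      (Real.le_norm_self _).trans (ContinuousLinearMap.le_opNorm _ _)
    _ ≤ M * ‖x + t • δ - x‖ * ‖δ‖ := by
      gcongr; exact norm_fderiv_sub_fderiv_le_of_norm_iteratedFDeriv_two_le hg hM _ _
    _ = M * ‖δ‖ ^ 2 * t := by
      rw [add_sub_cancel_left, norm_smul, Real.norm_of_nonneg ht.1]; ring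
  simpa [mul_div_right_comm] using key

end

lemma ContDiff.apply_normalized_gradient_step_le {F : Type*} [NormedAddCommGroup F]
    [InnerProductSpace ℝ F] [CompleteSpace F] {g : F → ℝ} (hg : ContDiff ℝ 2 g) {M : ℝ}
    (hM : ∀ w, ‖iteratedFDeriv ℝ 2 g w‖ ≤ M) {x : F} (hx : gradient g x ≠ 0) (ε : ℝ) :
    g (x + (-(ε / ‖gradient g x‖)) • gradient g x) ≤ g x - ε * ‖gradient g x‖ + M / 2 * ε ^ 2 := by
  have hnorm : ‖gradient g x‖ ≠ 0 := norm_ne_zero_iff.2 hx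
  have hslope : fderiv ℝ g x ((-(ε / ‖gradient g x‖)) • gradient g x) = -(ε * ‖gradient g x‖) := by
    rw [← inner_gradient_left, real_inner_smul_right, real_inner_self_eq_norm_sq]
    field_simp
  have hstep : ‖(-(ε / ‖gradient g x‖)) • gradient g x‖ ^ 2 = ε ^ 2 := by
    rw [norm_smul, mul_pow, Real.norm_eq_abs, sq_abs]
    field_simp
  have := hg.le_add_fderiv_add_of_norm_iteratedFDeriv_two_le hM x
    ((-(ε / ‖gradient g x‖)) • gradient g x)
  rwa [hslope, hstep, ← sub_eq_add_neg] at this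

theorem distribution_mismatch_lower_bound_general {d K : ℕ}
    (f : EuclideanSpace ℝ (Fin d) → Fin K → ℝ)
    (hsmooth : ∀ j : Fin K, ContDiff ℝ 2 fun w => f w j)
    (x : EuclideanSpace ℝ (Fin d)) (y : Fin K)
    (ε σm σM L : ℝ) (hε : 0 < ε) (hσm : 0 < σm) (hL : 0 < L)
    (hHess : ∀ w, ‖iteratedFDeriv ℝ 2 (fun u => f u y) w‖ ≤ σM)
    (hLip : ∀ a b, |f a y - f b y| ≤ L * ‖a - b‖)
    (hgrad : gradient (fun w => f w y) x ≠ 0)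
    (hstruct : ∃ xstar z : EuclideanSpace ℝ (Fin d),
      f xstar y = 1 ∧
      gradient (fun w => f w y) x =
        (fderiv ℝ (fun w => gradient (fun u => f u y) w) z) (x - xstar) ∧
      ∀ v, σm * ‖v‖ ≤ ‖(fderiv ℝ (fun w => gradient (fun u => f u y) w) z) v‖) :
    ε / 2 * (1 - f x y) * (σm / L) - ε ^ 2 / 4 * σM ≤
      (1 / 2) * ∑ j : Fin K,
        |f x j -
          f (x + (-(ε / ‖gradient (fun w => f w y) x‖)) •
            gradient (fun w => f w y) x) j| := by
  set G := gradient (fun w => f w y) x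
  set x' := x + (-(ε / ‖G‖)) • G
  obtain ⟨xstar, z, hxstar, hGeq, hσm_le⟩ := hstruct
  have hgap : 1 - f x y ≤ L * ‖x - xstar‖ := by
    simpa [hxstar, norm_sub_rev] using (le_abs_self _).trans (hLip xstar x)
  have hG : (1 - f x y) * (σm / L) ≤ ‖G‖ := calc
    (1 - f x y) * (σm / L) ≤ L * ‖x - xstar‖ * (σm / L) := by gcongr
    _ = σm * ‖x - xstar‖ := by field_simp
    _ ≤ ‖G‖ := hGeq ▸ hσm_le _
  have hdescent : f x' y ≤ f x y - ε * ‖G‖ + σM / 2 * ε ^ 2 :=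
    (hsmooth y).apply_normalized_gradient_step_le hHess hgrad ε
  have hcoord : f x y - f x' y ≤ ∑ j, |f x j - f x' j| :=
    (le_abs_self _).trans (Finset.single_le_sum (fun j _ => abs_nonneg (f x j - f x' j))
      (Finset.mem_univ y))
  linarith [mul_le_mul_of_nonneg_left hG hε.le]

/-- Adversarial perturbation causes distribution mismatch: under the curvature, Lipschitz and
gradient assumptions, the total variation distance between the true label distributions
`f(x)` and `f(x')` at a clean input `x` and its FGSM adversarial example
`x' = x - ε ∇f(x)_y/‖∇f(x)_y‖₂` is at least `(ε/2)(1 - f(x)_y) σm/L - (ε²/4) σM`. -/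
theorem distribution_mismatch_lower_bound {d K : ℕ}
    (f : EuclideanSpace ℝ (Fin d) → Fin K → ℝ)
    (hprob : ∀ w, (∀ j, 0 ≤ f w j) ∧ ∑ j : Fin K, f w j = 1)
    (hsmooth : ∀ j : Fin K, ContDiff ℝ 2 fun w => f w j)
    (x : EuclideanSpace ℝ (Fin d)) (y : Fin K)
    (ε σm σM L : ℝ) (hε : 0 < ε) (hσm : 0 < σm) (hσmM : σm ≤ σM) (hL : 0 < L)
    (hHess : ∀ w, ‖iteratedFDeriv ℝ 2 (fun u => f u y) w‖ ≤ σM)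
    (hLip : ∀ a b, |f a y - f b y| ≤ L * ‖a - b‖)
    (hgrad : gradient (fun w => f w y) x ≠ 0)
    (hstruct : ∃ xstar z : EuclideanSpace ℝ (Fin d),
      f xstar y = 1 ∧
      gradient (fun w => f w y) x =
        (fderiv ℝ (fun w => gradient (fun u => f u y) w) z) (x - xstar) ∧
      ∀ v, σm * ‖v‖ ≤ ‖(fderiv ℝ (fun w => gradient (fun u => f u y) w) z) v‖) :
    ε / 2 * (1 - f x y) * (σm / L) - ε ^ 2 / 4 * σM ≤
      (1 / 2) * ∑ j : Fin K,
        |f x j -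
          f (x + (-(ε / ‖gradient (fun w => f w y) x‖)) •
            gradient (fun w => f w y) x) j| :=
  distribution_mismatch_lower_bound_general f hsmooth x y ε σm σM L hε hσm hL hHess hLip hgrad
    hstruct
end

section
/- Let f : ℝ^d → ℝ^K be such that f(w) is a probability vector on {1,…,K} for every w and each coordinate f(·)_j is twice continuously differentiable, with ‖∇²f(w)_y‖_op ≤ σ_M for every w for a fixed class y. Let x ∈ ℝ^d with ∇f(x)_y ≠ 0, let ε > 0, and set δ = −ε ∇f(x)_y/‖∇f(x)_y‖_∞ and x' = x + δ. Then (1/2)∑_{j=1}^K |f(x)_j − f(x')_j| ≥ (1/2)[ε ‖∇f(x)_y‖_∞ − (σ_M/2) ε² d]. -/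
open Finset

/-- The ℓ∞ norm of a vector in `ℝ^d`, i.e. `max_i |v i|`. -/
noncomputable def linftyNorm {d : ℕ} (v : EuclideanSpace ℝ (Fin d)) : ℝ :=
  ‖(WithLp.equiv 2 (Fin d → ℝ)) v‖

/-!
Already the probability of the attacked class `y` moves by the claimed amount. A Hessian
bounded by `σM` makes the derivative of `f(·)_y` `σM`-Lipschitz, so by the descent lemma
`f(x + δ)_y ≤ f(x)_y + ⟪∇f(x)_y, δ⟫ + (σM/2)‖δ‖₂²`. For the FGSM step,
`⟪∇f(x)_y, δ⟫ = -(ε/‖∇f(x)_y‖∞)‖∇f(x)_y‖₂² ≤ -ε‖∇f(x)_y‖∞` and `‖δ‖∞ = ε`, so `‖δ‖₂² ≤ d ε²`.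
Finally `|f(x)_y - f(x')_y|` is one term of the ℓ¹ sum.
-/

section Linfty

variable {d : ℕ}

lemma linftyNorm_le_norm (v : EuclideanSpace ℝ (Fin d)) : linftyNorm v ≤ ‖v‖ :=
  pi_norm_le_iff_of_nonneg (norm_nonneg v) |>.2 fun i => PiLp.norm_apply_le v i

lemma linftyNorm_smul (c : ℝ) (v : EuclideanSpace ℝ (Fin d)) :
    linftyNorm (c • v) = |c| * linftyNorm v := by
  simp [linftyNorm, norm_smul]

lemma linftyNorm_pos {v : EuclideanSpace ℝ (Fin d)} (hv : v ≠ 0) : 0 < linftyNorm v := by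
  simpa [linftyNorm] using hv

lemma norm_sq_le_card_mul_linftyNorm_sq (v : EuclideanSpace ℝ (Fin d)) :
    ‖v‖ ^ 2 ≤ d * linftyNorm v ^ 2 :=
  calc ‖v‖ ^ 2 = ∑ i, ‖v i‖ ^ 2 := EuclideanSpace.norm_sq_eq v
    _ ≤ ∑ _i : Fin d, linftyNorm v ^ 2 := by
      gcongr with i
      exact norm_le_pi_norm ((WithLp.equiv 2 (Fin d → ℝ)) v) i
    _ = d * linftyNorm v ^ 2 := by simp

end Linfty

section Smoothness

variable {E : Type*} [NormedAddCommGroup E] [NormedSpace ℝ E]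

lemma norm_fderiv_sub_le_of_norm_iteratedFDeriv_two_le {F : Type*} [NormedAddCommGroup F]
    [NormedSpace ℝ F] {h : E → F} (hs : ContDiff ℝ 2 h) {σ : ℝ}
    (hb : ∀ w, ‖iteratedFDeriv ℝ 2 h w‖ ≤ σ) (a b : E) :
    ‖fderiv ℝ h a - fderiv ℝ h b‖ ≤ σ * ‖a - b‖ := by
  have hd : Differentiable ℝ (fderiv ℝ h) :=
    (hs.fderiv_right (m := 1) le_rfl).differentiable one_ne_zero
  refine convex_univ.norm_image_sub_le_of_norm_fderiv_le (fun w _ => hd w) (fun w _ => ?_)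
    trivial trivial
  rw [← norm_iteratedFDeriv_one, norm_iteratedFDeriv_fderiv]
  exact hb w

lemma image_add_le_of_norm_fderiv_sub_le {h : E → ℝ} (hd : Differentiable ℝ h) {σ : ℝ}
    (hL : ∀ a b, ‖fderiv ℝ h a - fderiv ℝ h b‖ ≤ σ * ‖a - b‖) (x δ : E) :
    h (x + δ) ≤ h x + fderiv ℝ h x δ + σ / 2 * ‖δ‖ ^ 2 := by
  set φ : ℝ → ℝ := fun t => h (x + t • δ) - t * fderiv ℝ h x δ - σ / 2 * t ^ 2 * ‖δ‖ ^ 2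
  have hφ : ∀ t, HasDerivAt φ
      (fderiv ℝ h (x + t • δ) δ - fderiv ℝ h x δ - σ * t * ‖δ‖ ^ 2) t := by
    intro t
    have hline : HasDerivAt (fun s : ℝ => x + s • δ) δ t := by
      simpa using ((hasDerivAt_id t).smul_const δ).const_add x
    have hcomp : HasDerivAt (fun s => h (x + s • δ)) (fderiv ℝ h (x + t • δ) δ) t :=
      (hd _).hasFDerivAt.comp_hasDerivAt t hline
    exact ((hcomp.sub ((hasDerivAt_id t).mul_const (fderiv ℝ h x δ))).sub
      (((hasDerivAt_pow 2 t).const_mul (σ / 2)).mul_const (‖δ‖ ^ 2))).congr_deriv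
      (by push_cast; ring)
  have hanti : AntitoneOn φ (Set.Ici 0) := by
    refine antitoneOn_of_deriv_nonpos (convex_Ici 0)
      (fun t _ => (hφ t).continuousAt.continuousWithinAt)
      (fun t _ => (hφ t).differentiableAt.differentiableWithinAt) fun t ht => ?_
    rw [interior_Ici] at ht
    rw [(hφ t).deriv, sub_nonpos, ← sub_apply]
    calc (fderiv ℝ h (x + t • δ) - fderiv ℝ h x) δ
        ≤ ‖fderiv ℝ h (x + t • δ) - fderiv ℝ h x‖ * ‖δ‖ :=
          (Real.le_norm_self _).trans (ContinuousLinearMap.le_opNorm _ _)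
      _ ≤ σ * ‖t • δ‖ * ‖δ‖ := by
        gcongr
        simpa using hL (x + t • δ) x
      _ = σ * t * ‖δ‖ ^ 2 := by
        rw [norm_smul, Real.norm_of_nonneg (le_of_lt ht)]; ring
  have h01 : φ 1 ≤ φ 0 := hanti Set.self_mem_Ici (Set.mem_Ici.2 zero_le_one) zero_le_one
  simp only [φ, one_smul, one_mul, one_pow, mul_one, zero_smul, add_zero, zero_mul, sub_zero,
    ne_eq, OfNat.ofNat_ne_zero, not_false_eq_true, zero_pow, mul_zero, tsub_le_iff_right] at h01
  linarith

end Smoothness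

theorem distribution_mismatch_linf_general {d K : ℕ}
    (f : EuclideanSpace ℝ (Fin d) → Fin K → ℝ)
    (hsmooth : ∀ j : Fin K, ContDiff ℝ 2 fun w => f w j)
    (y : Fin K) (σM : ℝ)
    (hHess : ∀ w, ‖iteratedFDeriv ℝ 2 (fun u => f u y) w‖ ≤ σM)
    (x : EuclideanSpace ℝ (Fin d))
    (hgrad : gradient (fun w => f w y) x ≠ 0)
    (ε : ℝ) (hε : 0 < ε) :
    (1 / 2) * (ε * linftyNorm (gradient (fun w => f w y) x) -
        σM / 2 * ε ^ 2 * d) ≤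
      (1 / 2) * ∑ j : Fin K,
        |f x j -
          f (x + (-(ε / linftyNorm (gradient (fun w => f w y) x))) •
            gradient (fun w => f w y) x) j| := by
  set g := gradient (fun w => f w y) x
  set n := linftyNorm g
  set δ := (-(ε / n)) • g
  have hn : 0 < n := linftyNorm_pos hgrad
  have hσ : 0 ≤ σM := (norm_nonneg _).trans (hHess x)
  have hdescent := image_add_le_of_norm_fderiv_sub_le ((hsmooth y).differentiable two_ne_zero)
    (norm_fderiv_sub_le_of_norm_iteratedFDeriv_two_le (hsmooth y) hHess) x δ
  have hslope : fderiv ℝ (fun w => f w y) x δ ≤ -(ε * n) := by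
    rw [← toDual_gradient, InnerProductSpace.toDual_apply_apply, real_inner_smul_right,
      real_inner_self_eq_norm_sq]
    have hgn : n ≤ ‖g‖ := linftyNorm_le_norm g
    calc -(ε / n) * ‖g‖ ^ 2 = -(ε / n * ‖g‖ ^ 2) := neg_mul _ _
      _ ≤ -(ε / n * n ^ 2) := by gcongr
      _ = -(ε * n) := by field_simp
  have hstep : ‖δ‖ ^ 2 ≤ d * ε ^ 2 := by
    have hδ : linftyNorm δ = ε := by
      rw [linftyNorm_smul, abs_neg, abs_div, abs_of_pos hε, abs_of_pos hn,
        div_mul_cancel₀ _ hn.ne']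
    simpa [hδ] using norm_sq_le_card_mul_linftyNorm_sq δ
  have hy : ε * n - σM / 2 * ε ^ 2 * d ≤ |f x y - f (x + δ) y| := by
    have : σM / 2 * ‖δ‖ ^ 2 ≤ σM / 2 * (d * ε ^ 2) := by gcongr
    linarith [le_abs_self (f x y - f (x + δ) y)]
  gcongr
  exact hy.trans (single_le_sum (fun j _ => abs_nonneg (f x j - f (x + δ) j)) (mem_univ y))

/-- ℓ∞ distribution-mismatch bound: the total variation distance between the label
distributions at `x` and its ℓ∞-normalized FGSM adversarial example
`x' = x - ε ∇f(x)_y/‖∇f(x)_y‖_∞` is at least `(1/2)[ε ‖∇f(x)_y‖_∞ - (σM/2) ε² d]`. -/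
theorem distribution_mismatch_linf {d K : ℕ}
    (f : EuclideanSpace ℝ (Fin d) → Fin K → ℝ)
    (hprob : ∀ w, (∀ j, 0 ≤ f w j) ∧ ∑ j : Fin K, f w j = 1)
    (hsmooth : ∀ j : Fin K, ContDiff ℝ 2 fun w => f w j)
    (y : Fin K) (σM : ℝ)
    (hHess : ∀ w, ‖iteratedFDeriv ℝ 2 (fun u => f u y) w‖ ≤ σM)
    (x : EuclideanSpace ℝ (Fin d))
    (hgrad : gradient (fun w => f w y) x ≠ 0)
    (ε : ℝ) (hε : 0 < ε) :
    (1 / 2) * (ε * linftyNorm (gradient (fun w => f w y) x) -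
        σM / 2 * ε ^ 2 * d) ≤
      (1 / 2) * ∑ j : Fin K,
        |f x j -
          f (x + (-(ε / linftyNorm (gradient (fun w => f w y) x))) •
            gradient (fun w => f w y) x) j| :=
  distribution_mismatch_linf_general f hsmooth y σM hHess x hgrad ε hε
end

section
/- Let K ≥ 2, let q be a probability vector on {1,…,K}, and let j* be an index maximizing q with 1/K < q_{j*} < 1. Let z ∈ ℝ^K be logits with z_{j*} > z_j for all j ≠ j*. Then there exists a temperature T* > 0 such that (1/2)∑_{j=1}^K |σ_{T*}(z)_j − q_j| ≤ 1 − q_{j*}, and consequently, for every label y ∈ {1,…,K}, (1/2)∑_{j=1}^K |σ_{T*}(z)_j − q_j| ≤ (1/2)∑_{j=1}^K |𝟙(y)_j − q_j|. -/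
open Finset

noncomputable def tempSoftmax {K : ℕ} (z : Fin K → ℝ) (T : ℝ) (j : Fin K) : ℝ :=
  Real.exp (z j / T) / ∑ k : Fin K, Real.exp (z k / T)

/-!
Parametrise the temperature by its inverse `β = 1/T`. The softmax weight of the top logit
`j*` is continuous in `β`, equals `1/K` at `β = 0` and tends to `1` as `β → ∞`, so by the
intermediate value theorem some `β > 0` makes it equal to `q_{j*}`. Two probability vectors
agreeing at `j*` are at total variation at most `1 - q_{j*}`, while the one-hot vector at `y`
is at total variation exactly `1 - q_y ≥ 1 - q_{j*}` from `q`.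
-/

section TotalVariation

variable {ι : Type*} [Fintype ι] {p q : ι → ℝ}

theorem sum_abs_sub_le_of_apply_eq (hp : ∀ j, 0 ≤ p j) (hp1 : ∑ j, p j = 1)
    (hq : ∀ j, 0 ≤ q j) (hq1 : ∑ j, q j = 1) {i : ι} (hi : p i = q i) :
    ∑ j, |p j - q j| ≤ 2 * (1 - q i) := by
  classical
  have hterm : ∀ j, |p j - q j| ≤ p j + q j - if j = i then 2 * q j else 0 := by
    intro j
    split_ifs with h
    · subst h; rw [hi, sub_self, abs_zero]; linarith
    · rw [sub_zero, abs_le]; constructor <;> linarith [hp j, hq j]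
  calc ∑ j, |p j - q j| ≤ ∑ j, (p j + q j - if j = i then 2 * q j else 0) :=
        sum_le_sum fun j _ => hterm j
    _ = 2 * (1 - q i) := by
        rw [sum_sub_distrib, sum_add_distrib, hp1, hq1, sum_ite_eq']
        simp only [mem_univ, if_true]; ring

theorem sum_abs_ite_sub [DecidableEq ι] (hq : ∀ j, 0 ≤ q j) (hq1 : ∑ j, q j = 1) (y : ι) :
    ∑ j, |(if j = y then (1 : ℝ) else 0) - q j| = 2 * (1 - q y) := by
  have hqy : q y ≤ 1 := hq1 ▸ single_le_sum (fun j _ => hq j) (mem_univ y)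
  have hterm : ∀ j,
      |(if j = y then (1 : ℝ) else 0) - q j| = q j + if j = y then 1 - 2 * q j else 0 := by
    intro j
    split_ifs with h
    · subst h; rw [abs_of_nonneg (by linarith)]; ring
    · rw [zero_sub, abs_neg, abs_of_nonneg (hq j), add_zero]
  rw [sum_congr rfl fun j _ => hterm j, sum_add_distrib, hq1, sum_ite_eq']
  simp only [mem_univ, if_true]; ring

end TotalVariation

section Softmax

variable {K : ℕ} (z : Fin K → ℝ)

theorem tempSoftmax_nonneg (T : ℝ) (j : Fin K) : 0 ≤ tempSoftmax z T j := by
  unfold tempSoftmax; positivity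

theorem sum_tempSoftmax [NeZero K] (T : ℝ) : ∑ j, tempSoftmax z T j = 1 := by
  simp only [tempSoftmax, ← sum_div]
  exact div_self (sum_pos (fun k _ => Real.exp_pos _) univ_nonempty).ne'

/-- Since `z j / 0 = 0`, temperature `0` gives the uniform distribution (the `T → ∞` limit). -/
theorem tempSoftmax_zero (j : Fin K) : tempSoftmax z 0 j = (K : ℝ)⁻¹ := by
  simp [tempSoftmax]

theorem tempSoftmax_inv (β : ℝ) (j : Fin K) :
    tempSoftmax z β⁻¹ j = Real.exp (z j * β) / ∑ k, Real.exp (z k * β) := by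
  simp only [tempSoftmax, div_inv_eq_mul]

theorem continuous_tempSoftmax_inv [NeZero K] (j : Fin K) :
    Continuous fun β => tempSoftmax z β⁻¹ j := by
  simp only [tempSoftmax_inv]
  exact (by fun_prop : Continuous _).div (by fun_prop)
    fun β => (sum_pos (fun k _ => Real.exp_pos _) univ_nonempty).ne'

theorem tempSoftmax_inv_eq_inv_sum (β : ℝ) (i : Fin K) :
    tempSoftmax z β⁻¹ i = (∑ k, Real.exp ((z k - z i) * β))⁻¹ := by
  simp only [tempSoftmax_inv, sub_mul, Real.exp_sub, ← sum_div, inv_div]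

theorem tendsto_tempSoftmax_inv_atTop {i : Fin K} (hz : ∀ j, j ≠ i → z j < z i) :
    Filter.Tendsto (fun β => tempSoftmax z β⁻¹ i) Filter.atTop (nhds 1) := by
  have hterm : ∀ k, Filter.Tendsto (fun β => Real.exp ((z k - z i) * β)) Filter.atTop
      (nhds (if k = i then 1 else 0)) := by
    intro k
    split_ifs with h
    · simp [h]
    · exact Real.tendsto_exp_atBot.comp
        (Filter.tendsto_id.const_mul_atTop_of_neg (sub_neg.mpr (hz k h)))
  simpa [tempSoftmax_inv_eq_inv_sum] using (tendsto_finsetSum univ fun k _ => hterm k).inv₀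
    (by simp)

theorem exists_pos_tempSoftmax_eq {i : Fin K} (hz : ∀ j, j ≠ i → z j < z i) {p : ℝ}
    (hlo : 1 / (K : ℝ) < p) (hhi : p < 1) : ∃ T, 0 < T ∧ tempSoftmax z T i = p := by
  have : NeZero K := NeZero.of_pos i.pos
  rw [one_div, ← tempSoftmax_zero z i, ← inv_zero] at hlo
  obtain ⟨B, hB, hB0⟩ := (((tendsto_tempSoftmax_inv_atTop z hz).eventually
    (eventually_gt_nhds hhi)).and (Filter.eventually_ge_atTop 0)).exists
  obtain ⟨β, hβ, hβp⟩ :=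
    intermediate_value_Icc hB0 (continuous_tempSoftmax_inv z i).continuousOn ⟨hlo.le, hB.le⟩
  have hβ0 : β ≠ 0 := by rintro rfl; exact hlo.ne hβp
  exact ⟨β⁻¹, inv_pos.mpr (hβ.1.lt_of_ne' hβ0), hβp⟩

end Softmax

theorem tempSoftmax_better_than_one_hot_general {K : ℕ}
    (q : Fin K → ℝ) (hq : (∀ j, 0 ≤ q j) ∧ ∑ j : Fin K, q j = 1)
    (jstar : Fin K) (hmaxq : ∀ j : Fin K, q j ≤ q jstar)
    (hlo : 1 / (K : ℝ) < q jstar) (hhi : q jstar < 1)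
    (z : Fin K → ℝ) (hmaxz : ∀ j : Fin K, j ≠ jstar → z j < z jstar) :
    ∃ Tstar : ℝ, 0 < Tstar ∧
      (1 / 2) * ∑ j : Fin K, |tempSoftmax z Tstar j - q j| ≤ 1 - q jstar ∧
      ∀ y : Fin K,
        (1 / 2) * ∑ j : Fin K, |tempSoftmax z Tstar j - q j| ≤
          (1 / 2) * ∑ j : Fin K, |(if j = y then (1 : ℝ) else 0) - q j| := by
  obtain ⟨hq0, hq1⟩ := hq
  have : NeZero K := NeZero.of_pos jstar.pos
  obtain ⟨T, hT, hTq⟩ := exists_pos_tempSoftmax_eq z hmaxz hlo hhi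
  have htv := sum_abs_sub_le_of_apply_eq (tempSoftmax_nonneg z T) (sum_tempSoftmax z T) hq0 hq1 hTq
  refine ⟨T, hT, by linarith, fun y => ?_⟩
  rw [sum_abs_ite_sub hq0 hq1 y]
  linarith [hmaxq y]

/-- There is a temperature `T*` at which the tempered softmax of logits `z` (whose top
prediction `j*` agrees with the top class of the true label distribution `q`) approximates
`q` in total variation at least as well as any one-hot assigned label: the total variation is
at most `1 - q_{j*}`, hence at most the total variation of any one-hot vector to `q`. -/
theorem tempSoftmax_better_than_one_hot {K : ℕ} (hK : 2 ≤ K)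
    (q : Fin K → ℝ) (hq : (∀ j, 0 ≤ q j) ∧ ∑ j : Fin K, q j = 1)
    (jstar : Fin K) (hmaxq : ∀ j : Fin K, q j ≤ q jstar)
    (hlo : 1 / (K : ℝ) < q jstar) (hhi : q jstar < 1)
    (z : Fin K → ℝ) (hmaxz : ∀ j : Fin K, j ≠ jstar → z j < z jstar) :
    ∃ Tstar : ℝ, 0 < Tstar ∧
      (1 / 2) * ∑ j : Fin K, |tempSoftmax z Tstar j - q j| ≤ 1 - q jstar ∧
      ∀ y : Fin K,
        (1 / 2) * ∑ j : Fin K, |tempSoftmax z Tstar j - q j| ≤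
          (1 / 2) * ∑ j : Fin K, |(if j = y then (1 : ℝ) else 0) - q j| :=
  tempSoftmax_better_than_one_hot_general q hq jstar hmaxq hlo hhi z hmaxz
end

section
/- Let p and q be probability vectors on {1,…,K}, let j* be an index with p_{j*} ≤ q_{j*} and p_{j*} < 1, and set λ = (1 − q_{j*})/(1 − p_{j*}), so that λ ∈ [0,1] and λ p_{j*} + (1 − λ) = q_{j*}. Then interpolation with the one-hot vector at j* does not increase the total variation distance to q: (1/2)∑_{j=1}^K |λ p_j + (1 − λ) 𝟙(j*)_j − q_j| ≤ (1/2)∑_{j=1}^K |p_j − q_j|. -/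
/-!
The choice of `λ` makes the rectified distribution agree with `q` at `j*`, which saves
`|p_{j*} - q_{j*}| = q_{j*} - p_{j*}`. Off `j*` the rectified distribution is `p` scaled by `λ ≤ 1`,
so by the triangle inequality it costs at most the removed mass `(1 - λ)(1 - p_{j*})`, which is
again `q_{j*} - p_{j*}`.
-/

open Finset

lemma sum_erase_abs_interpolate_sub_le {ι : Type*} [Fintype ι] [DecidableEq ι] (p q : ι → ℝ)
    (hp0 : ∀ j, 0 ≤ p j) (hp1 : ∑ j, p j = 1) (i : ι) {l : ℝ} (hl : l ≤ 1) :
    ∑ j ∈ univ.erase i, |l * p j + (1 - l) * (if j = i then (1 : ℝ) else 0) - q j| ≤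
      ∑ j ∈ univ.erase i, |p j - q j| + (1 - l) * (1 - p i) := by
  have hrest : ∑ j ∈ univ.erase i, p j = 1 - p i := by
    rw [← hp1, ← sum_erase_add univ p (mem_univ i), add_sub_cancel_right]
  calc ∑ j ∈ univ.erase i, |l * p j + (1 - l) * (if j = i then (1 : ℝ) else 0) - q j|
      = ∑ j ∈ univ.erase i, |(p j - q j) - (1 - l) * p j| :=
        sum_congr rfl fun j hj => by rw [if_neg (ne_of_mem_erase hj)]; ring_nf
    _ ≤ ∑ j ∈ univ.erase i, (|p j - q j| + (1 - l) * p j) :=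
        sum_le_sum fun j _ => (abs_sub _ _).trans_eq <| by
          rw [abs_of_nonneg (mul_nonneg (sub_nonneg.2 hl) (hp0 j))]
    _ = ∑ j ∈ univ.erase i, |p j - q j| + (1 - l) * (1 - p i) := by
        rw [sum_add_distrib, ← mul_sum, hrest]

theorem interpolation_tv_le_general {K : ℕ} (p q : Fin K → ℝ)
    (hp : (∀ j, 0 ≤ p j) ∧ ∑ j : Fin K, p j = 1)
    (jstar : Fin K) (hle : p jstar ≤ q jstar) (hlt : p jstar < 1) :
    (1 / 2) * ∑ j : Fin K,
        |(1 - q jstar) / (1 - p jstar) * p j +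
          (1 - (1 - q jstar) / (1 - p jstar)) * (if j = jstar then (1 : ℝ) else 0) -
          q j| ≤
      (1 / 2) * ∑ j : Fin K, |p j - q j| := by
  set l := (1 - q jstar) / (1 - p jstar)
  have hl : l * (1 - p jstar) = 1 - q jstar := div_mul_cancel₀ _ (sub_pos.2 hlt).ne'
  have hl1 : l ≤ 1 := (div_le_one (sub_pos.2 hlt)).2 (by linarith)
  have hvertex : |l * p jstar + (1 - l) * (if jstar = jstar then (1 : ℝ) else 0) - q jstar| = 0 := by
    rw [if_pos rfl, abs_eq_zero]
    linarith
  have hrest := sum_erase_abs_interpolate_sub_le p q hp.1 hp.2 jstar hl1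
  rw [← sum_erase_add univ _ (mem_univ jstar),
    ← sum_erase_add univ (fun j => |p j - q j|) (mem_univ jstar), hvertex,
    abs_of_nonpos (sub_nonpos.2 hle)]
  linarith

/-- Interpolation with the assigned one-hot label does not increase the total variation
distance to the true label distribution: if `p_{j*} ≤ q_{j*}` and `p_{j*} < 1`, then for
`λ = (1 - q_{j*})/(1 - p_{j*})` the rectified distribution `λ p + (1-λ) 𝟙(j*)` is at least
as close to `q` in total variation as `p` is. -/
theorem interpolation_tv_le {K : ℕ} (p q : Fin K → ℝ)
    (hp : (∀ j, 0 ≤ p j) ∧ ∑ j : Fin K, p j = 1)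
    (hq : (∀ j, 0 ≤ q j) ∧ ∑ j : Fin K, q j = 1)
    (jstar : Fin K) (hle : p jstar ≤ q jstar) (hlt : p jstar < 1) :
    (1 / 2) * ∑ j : Fin K,
        |(1 - q jstar) / (1 - p jstar) * p j +
          (1 - (1 - q jstar) / (1 - p jstar)) * (if j = jstar then (1 : ℝ) else 0) -
          q j| ≤
      (1 / 2) * ∑ j : Fin K, |p j - q j| :=
  interpolation_tv_le_general p q hp jstar hle hlt
end
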